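/- Consider a two-polygon configuration with n ≥ 3 and r = Γ₂/Γ₁ > 0. Then equation (1) has exactly two solutions x > 0 (both different from 1), and the number of solutions x > 0 of equation (2) is at least one and at most three. Consequently, for same-sign vorticities there are exactly two relative equilibria with argument of s₂/s₁ equal to 2Kπ/n, and exactly one, two, or three relative equilibria with argument 2(K+1/2)π/n. -/

import Mathlib

private lemma piece {f : ℝ → ℝ} {S I : Set ℝ} (hS : ∀ x ∈ S, f x = 0) (hI : Set.InjOn f I) :
    (S ∩ I).encard ≤ 1 := by
  rw [Set.encard_le_one_iff]
  intro a b ha hb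
  exact hI ha.2 hb.2 ((hS a ha.1).trans (hS b hb.1).symm)

private lemma phi_shape (m : ℕ) (A b : ℝ) (hA : 0 < A) :
    ∃ (H : ℝ → ℝ) (s : ℝ),
      (∀ x : ℝ, H x = ((m:ℝ)+5)*x^(m+3) - A*((m:ℝ)+3)*x^(m+1) + b) ∧
      Continuous H ∧ 0 < s ∧
      StrictAntiOn H (Set.Icc 0 s) ∧ StrictMonoOn H (Set.Ici s) ∧
      ∀ y : ℝ, ∃ X : ℝ, y < X ∧ 0 < H X := by
  set H : ℝ → ℝ := fun x => ((m:ℝ)+5)*x^(m+3) - A*((m:ℝ)+3)*x^(m+1) + b with hH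
  have hm0 : (0:ℝ) ≤ (m:ℝ) := Nat.cast_nonneg m
  have hder : ∀ x : ℝ, HasDerivAt H (((m:ℝ)+3)*x^m*(((m:ℝ)+5)*x^2 - A*((m:ℝ)+1))) x := by
    intro x
    have p := (((hasDerivAt_pow (m+3) x).const_mul (((m:ℝ)+5))).sub
      ((hasDerivAt_pow (m+1) x).const_mul (A*((m:ℝ)+3)))).add_const b
    refine p.congr_deriv ?_
    rw [show m + 3 - 1 = m + 2 from rfl, show m + 1 - 1 = m from rfl]
    push_cast
    ring
  have hcont : Continuous H := by rw [hH]; fun_prop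
  set s : ℝ := Real.sqrt (A*((m:ℝ)+1)/((m:ℝ)+5)) with hsdef
  have hs0 : 0 < s := Real.sqrt_pos.mpr (by positivity)
  have hs2 : ((m:ℝ)+5) * s^2 = A*((m:ℝ)+1) := by
    rw [hsdef, Real.sq_sqrt (by positivity)]
    field_simp
  refine ⟨H, s, fun x => rfl, hcont, hs0, ?_, ?_, ?_⟩
  · apply strictAntiOn_of_deriv_neg (convex_Icc 0 s) hcont.continuousOn
    intro x hx
    rw [interior_Icc] at hx
    rw [(hder x).deriv]
    have hxm : 0 < x^m := pow_pos hx.1 m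
    have hxs : x^2 < s^2 := by nlinarith [hx.1, hx.2]
    have hx2 : ((m:ℝ)+5)*x^2 < A*((m:ℝ)+1) := by nlinarith
    exact mul_neg_of_pos_of_neg (by positivity) (by linarith)
  · apply strictMonoOn_of_deriv_pos (convex_Ici s) hcont.continuousOn
    intro x hx
    rw [interior_Ici] at hx
    rw [(hder x).deriv]
    have hsx : s < x := hx
    have hx0 : 0 < x := hs0.trans hsx
    have hxs : s^2 < x^2 := by nlinarith
    have hx2 : A*((m:ℝ)+1) < ((m:ℝ)+5)*x^2 := by nlinarith
    have hxm : 0 < x^m := pow_pos hx0 m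
    exact mul_pos (by positivity) (by linarith)
  · intro y
    set X : ℝ := 1 + s + |y| + Real.sqrt (A*((m:ℝ)+3) + |b| + 1) with hXdef
    have hsq : Real.sqrt (A*((m:ℝ)+3) + |b| + 1) ^ 2 = A*((m:ℝ)+3) + |b| + 1 :=
      Real.sq_sqrt (by positivity)
    have hsqnn : 0 ≤ Real.sqrt (A*((m:ℝ)+3) + |b| + 1) := Real.sqrt_nonneg _
    have hynn : 0 ≤ |y| := abs_nonneg y
    have hX1 : 1 ≤ X := by rw [hXdef]; linarith
    have hXy : y < X := by
      have h1 := le_abs_self y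
      rw [hXdef]; linarith
    have hX2 : A*((m:ℝ)+3) + |b| + 1 ≤ X^2 := by
      rw [← hsq]
      apply pow_le_pow_left₀ hsqnn
      rw [hXdef]; linarith
    have hXp : 1 ≤ X^(m+1) := one_le_pow₀ hX1
    refine ⟨X, hXy, ?_⟩
    have hQ : |b| + 1 ≤ ((m:ℝ)+5)*X^2 - A*((m:ℝ)+3) := by
      nlinarith [mul_nonneg (by linarith : (0:ℝ) ≤ (m:ℝ)+4) (sq_nonneg X)]
    have hQX : |b| + 1 ≤ X^(m+1) * (((m:ℝ)+5)*X^2 - A*((m:ℝ)+3)) := by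
      nlinarith [mul_le_mul hXp hQ (by positivity) (by linarith : (0:ℝ) ≤ X^(m+1))]
    have hkey : ((m:ℝ)+5)*X^(m+3) - A*((m:ℝ)+3)*X^(m+1) + b
        = X^(m+1)*(((m:ℝ)+5)*X^2 - A*((m:ℝ)+3)) + b := by ring
    show 0 < ((m:ℝ)+5)*X^(m+3) - A*((m:ℝ)+3)*X^(m+1) + b
    rw [hkey]
    have := neg_abs_le b
    linarith

private lemma Fbig (m : ℕ) (A B r M : ℝ) (hr : 0 < r) (hB : 0 < B)
    (hM2 : A + B + 1 ≤ M^2) (hMpow : M^2 ≤ M^(m+3)) :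
    0 < M^(m+5) - A*M^(m+3) - B*M^2 + r := by
  have key : M^2*(M^2 - A) ≤ M^(m+3)*(M^2-A) :=
    mul_le_mul_of_nonneg_right hMpow (by linarith)
  have hexp : M^(m+5) = M^(m+3)*M^2 := by ring
  nlinarith [mul_le_mul_of_nonneg_left hM2 (sq_nonneg M), sq_nonneg M, hexp]

private lemma Gbig (m : ℕ) (A B r M : ℝ) (hr : 0 < r) (hB : 0 < B)
    (hM1 : 1 ≤ M) (hM2 : A + r + 1 ≤ M^2) (hMpow : M^2 ≤ M^(m+3)) :
    0 < M^(m+5) - A*M^(m+3) + B*M^2 - r := by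
  have key : M^2*(M^2 - A) ≤ M^(m+3)*(M^2-A) :=
    mul_le_mul_of_nonneg_right hMpow (by linarith)
  have hexp : M^(m+5) = M^(m+3)*M^2 := by ring
  nlinarith [mul_le_mul_of_nonneg_left hM2 (sq_nonneg M), sq_nonneg M, hexp,
    mul_pos hB (show (0:ℝ) < M^2 by nlinarith [hM1]),
    mul_nonneg hr.le (show (0:ℝ) ≤ M^2 - 1 by nlinarith [hM1])]

/-- Equation (1) for two concentric regular `n`-gons:
`(x² − (r + λ))(xⁿ − (λr + 1)) = λ(r² + λr + 1)`, with `λ = 2n/(n−1)` and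
`r = Γ₂/Γ₁`; its solutions `x > 0` (with `x ≠ 1` if `r = −1`) correspond
bijectively to the relative equilibria with argument of `s₂/s₁` equal to `2Kπ/n`. -/
def EqOne (n : ℕ) (lam r x : ℝ) : Prop :=
  (x ^ 2 - (r + lam)) * (x ^ n - (lam * r + 1)) = lam * (r ^ 2 + lam * r + 1)

/-- Equation (2): `(x² − (r + λ))(xⁿ + (λr + 1)) = −λ(r² + λr + 1)`; its solutions
`x > 0` correspond bijectively to the relative equilibria with argument of `s₂/s₁`
equal to `2(K+1/2)π/n`. -/
def EqTwo (n : ℕ) (lam r x : ℝ) : Prop :=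
  (x ^ 2 - (r + lam)) * (x ^ n + (lam * r + 1)) = -(lam * (r ^ 2 + lam * r + 1))

/-- **Counting two-polygon relative equilibria for `n ≥ 3` and same-sign
vorticities (`r = Γ₂/Γ₁ > 0`).** Equation (1) has exactly two solutions `x > 0`,
both different from `1` (two relative equilibria with argument `2Kπ/n`), and the
number of solutions `x > 0` of equation (2) is at least one and at most three
(one, two or three relative equilibria with argument `2(K+1/2)π/n`). -/
theorem two_polygon_count_same_sign
    (n : ℕ) (hn : 3 ≤ n)
    (Γ₁ Γ₂ : ℝ) (hΓ₁ : Γ₁ ≠ 0) (hΓ₂ : Γ₂ ≠ 0)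
    (r : ℝ) (hr : r = Γ₂ / Γ₁) (hrpos : 0 < r)
    (lam : ℝ) (hlam : lam = 2 * n / ((n : ℝ) - 1)) :
    {x : ℝ | 0 < x ∧ EqOne n lam r x}.encard = 2
    ∧ (∀ x : ℝ, 0 < x → EqOne n lam r x → x ≠ 1)
    ∧ 1 ≤ {x : ℝ | 0 < x ∧ EqTwo n lam r x}.encard
    ∧ {x : ℝ | 0 < x ∧ EqTwo n lam r x}.encard ≤ 3 := by
  obtain ⟨m, rfl⟩ : ∃ m, n = m + 3 := ⟨n - 3, by omega⟩
  have hm0 : (0:ℝ) ≤ (m:ℝ) := Nat.cast_nonneg m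
  have hlam0 : 0 < lam := by
    rw [hlam]
    apply div_pos <;> push_cast <;> linarith
  have hA : 0 < r + lam := by linarith
  have hB : 0 < lam*r + 1 := by nlinarith
  clear hr hΓ₁ hΓ₂ hlam hn
  ----------------------------------------------------------------
  -- Equation (1): F x = x^(m+5) - (r+lam) x^(m+3) - (lam r + 1) x² + r
  ----------------------------------------------------------------
  obtain ⟨H, s, hHval, hHcont, hs0, Hanti, Hmono, Hbig⟩ :=
    phi_shape m (r+lam) (-(2*(lam*r+1))) hA
  set F : ℝ → ℝ := fun x => x^(m+5) - (r+lam)*x^(m+3) - (lam*r+1)*x^2 + r with hFdef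
  have hFcont : Continuous F := by rw [hFdef]; fun_prop
  have hFeq : ∀ x : ℝ, EqOne (m+3) lam r x ↔ F x = 0 := by
    intro x
    simp only [hFdef]
    unfold EqOne
    constructor <;> intro h <;> linear_combination h
  have hFder : ∀ x : ℝ, deriv F x = x * H x := by
    intro x
    have p := (((hasDerivAt_pow (m+5) x).sub
      ((hasDerivAt_pow (m+3) x).const_mul (r+lam))).sub
      ((hasDerivAt_pow 2 x).const_mul (lam*r+1))).add_const r
    have p' : HasDerivAt F ((↑(m+5))*x^(m+5-1) - (r+lam)*(↑(m+3)*x^(m+3-1))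
        - (lam*r+1)*(↑2*x^(2-1))) x := by rw [hFdef]; exact p
    rw [p'.deriv, hHval]
    simp only [show m + 5 - 1 = m + 4 from rfl, show m + 3 - 1 = m + 2 from rfl]
    push_cast
    ring
  have hH0 : H 0 = -(2*(lam*r+1)) := by
    rw [hHval, zero_pow (by omega : m+3 ≠ 0), zero_pow (by omega : m+1 ≠ 0)]
    ring
  have hHs : H s < 0 := by
    have h := Hanti (Set.left_mem_Icc.mpr hs0.le) (Set.right_mem_Icc.mpr hs0.le) hs0
    rw [hH0] at h
    linarith
  obtain ⟨X, hsX, hHX⟩ := Hbig s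
  obtain ⟨c, hcmem, hHc⟩ :=
    intermediate_value_Ioo hsX.le hHcont.continuousOn ⟨hHs, hHX⟩
  have hc0 : 0 < c := hs0.trans hcmem.1
  have hHneg : ∀ x : ℝ, 0 < x → x < c → H x < 0 := by
    intro x hx hxc
    rcases le_or_gt x s with h | h
    · have h2 := Hanti (Set.left_mem_Icc.mpr hs0.le) ⟨hx.le, h⟩ hx
      rw [hH0] at h2
      linarith
    · have h2 := Hmono (Set.mem_Ici.mpr h.le) (Set.mem_Ici.mpr hcmem.1.le) hxc
      rwa [hHc] at h2
  have hHpos : ∀ x : ℝ, c < x → 0 < H x := by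
    intro x hx
    have h2 := Hmono (Set.mem_Ici.mpr hcmem.1.le)
      (Set.mem_Ici.mpr (hcmem.1.le.trans hx.le)) hx
    rwa [hHc] at h2
  have Fanti : StrictAntiOn F (Set.Icc 0 c) := by
    apply strictAntiOn_of_deriv_neg (convex_Icc 0 c) hFcont.continuousOn
    intro x hx
    rw [interior_Icc] at hx
    rw [hFder]
    exact mul_neg_of_pos_of_neg hx.1 (hHneg x hx.1 hx.2)
  have Fmono : StrictMonoOn F (Set.Ici c) := by
    apply strictMonoOn_of_deriv_pos (convex_Ici c) hFcont.continuousOn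
    intro x hx
    rw [interior_Ici] at hx
    rw [hFder]
    exact mul_pos (hc0.trans hx) (hHpos x hx)
  have hF0 : F 0 = r := by
    simp only [hFdef]
    rw [zero_pow (by omega : m+5 ≠ 0), zero_pow (by omega : m+3 ≠ 0)]
    norm_num
  have hFu : F (Real.sqrt (r+lam)) < 0 := by
    have hu2 : (Real.sqrt (r+lam))^2 = r + lam := Real.sq_sqrt hA.le
    have heq : F (Real.sqrt (r+lam)) = r - (lam*r+1)*(r+lam) := by
      simp only [hFdef]
      calc (Real.sqrt (r+lam))^(m+5) - (r+lam)*(Real.sqrt (r+lam))^(m+3)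
            - (lam*r+1)*(Real.sqrt (r+lam))^2 + r
          = ((Real.sqrt (r+lam))^2 - (r+lam))*(Real.sqrt (r+lam))^(m+3)
            - (lam*r+1)*(Real.sqrt (r+lam))^2 + r := by ring
        _ = r - (lam*r+1)*(r+lam) := by rw [hu2]; ring
    rw [heq]
    nlinarith [mul_pos hlam0 (mul_pos hrpos hrpos), mul_pos (mul_pos hlam0 hlam0) hrpos]
  have hFc : F c < 0 := by
    rcases lt_trichotomy (Real.sqrt (r+lam)) c with h | h | h
    · have h2 := Fanti ⟨Real.sqrt_nonneg _, h.le⟩ (Set.right_mem_Icc.mpr hc0.le) h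
      linarith
    · rw [← h]; exact hFu
    · have h2 := Fmono (Set.self_mem_Ici) (Set.mem_Ici.mpr h.le) h
      linarith
  set M : ℝ := 1 + c + Real.sqrt ((r+lam) + (lam*r+1) + 1) with hMdef
  have hsqM : Real.sqrt ((r+lam)+(lam*r+1)+1)^2 = (r+lam)+(lam*r+1)+1 :=
    Real.sq_sqrt (by positivity)
  have hsqMnn : 0 ≤ Real.sqrt ((r+lam)+(lam*r+1)+1) := Real.sqrt_nonneg _
  have hM1 : 1 ≤ M := by rw [hMdef]; linarith
  have hMc : c < M := by rw [hMdef]; linarith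
  have hM2 : (r+lam)+(lam*r+1)+1 ≤ M^2 := by
    rw [← hsqM]
    apply pow_le_pow_left₀ hsqMnn
    rw [hMdef]; linarith
  have hMpow : M^2 ≤ M^(m+3) := pow_le_pow_right₀ hM1 (by omega)
  have hFM : 0 < F M := by
    simp only [hFdef]
    exact Fbig m (r+lam) (lam*r+1) r M hrpos hB (by linarith) hMpow
  obtain ⟨x₁, hx₁mem, hFx₁⟩ :=
    intermediate_value_Ioo' hc0.le hFcont.continuousOn ⟨hFc, by rw [hF0]; exact hrpos⟩
  obtain ⟨x₂, hx₂mem, hFx₂⟩ :=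
    intermediate_value_Ioo hMc.le hFcont.continuousOn ⟨hFc, hFM⟩
  have hS1 : {x : ℝ | 0 < x ∧ EqOne (m+3) lam r x} = {x : ℝ | 0 < x ∧ F x = 0} := by
    ext x
    simp only [Set.mem_setOf_eq, hFeq]
  have hcard1 : {x : ℝ | 0 < x ∧ F x = 0}.encard = 2 := by
    apply le_antisymm
    · have hsub : {x : ℝ | 0 < x ∧ F x = 0} ⊆
          ({x : ℝ | 0 < x ∧ F x = 0} ∩ Set.Icc 0 c) ∪
          ({x : ℝ | 0 < x ∧ F x = 0} ∩ Set.Ici c) := by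
        intro x hx
        rcases le_total x c with h | h
        · exact Or.inl ⟨hx, hx.1.le, h⟩
        · exact Or.inr ⟨hx, h⟩
      calc {x : ℝ | 0 < x ∧ F x = 0}.encard
          ≤ (({x : ℝ | 0 < x ∧ F x = 0} ∩ Set.Icc 0 c) ∪
             ({x : ℝ | 0 < x ∧ F x = 0} ∩ Set.Ici c)).encard := Set.encard_mono hsub
        _ ≤ ({x : ℝ | 0 < x ∧ F x = 0} ∩ Set.Icc 0 c).encard +
            ({x : ℝ | 0 < x ∧ F x = 0} ∩ Set.Ici c).encard := Set.encard_union_le _ _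
        _ ≤ 1 + 1 := add_le_add (piece (fun x hx => hx.2) Fanti.injOn)
            (piece (fun x hx => hx.2) Fmono.injOn)
        _ = 2 := one_add_one_eq_two
    · have hx1S : x₁ ∈ {x : ℝ | 0 < x ∧ F x = 0} := ⟨hx₁mem.1, hFx₁⟩
      have hx2S : x₂ ∈ {x : ℝ | 0 < x ∧ F x = 0} := ⟨hc0.trans hx₂mem.1, hFx₂⟩
      have hne : x₁ ≠ x₂ := ne_of_lt (hx₁mem.2.trans hx₂mem.1)
      calc (2:ℕ∞) = ({x₁, x₂} : Set ℝ).encard := (Set.encard_pair hne).symm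
        _ ≤ {x : ℝ | 0 < x ∧ F x = 0}.encard := by
            apply Set.encard_mono
            intro z hz
            simp only [Set.mem_insert_iff, Set.mem_singleton_iff] at hz
            rcases hz with rfl | rfl
            exacts [hx1S, hx2S]
  have hne1 : ∀ x : ℝ, 0 < x → EqOne (m+3) lam r x → x ≠ 1 := by
    intro x hx hE he
    rw [he] at hE
    unfold EqOne at hE
    rw [one_pow, one_pow] at hE
    have h0 : lam * (1 + r) = 0 := by linear_combination -hE
    nlinarith [mul_pos hlam0 (show (0:ℝ) < 1 + r by linarith)]
  ----------------------------------------------------------------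
  -- Equation (2): G x = x^(m+5) - (r+lam) x^(m+3) + (lam r + 1) x² - r
  ----------------------------------------------------------------
  obtain ⟨H₂, s₂, hH₂val, hH₂cont, hs₂0, H₂anti, H₂mono, H₂big⟩ :=
    phi_shape m (r+lam) (2*(lam*r+1)) hA
  set G : ℝ → ℝ := fun x => x^(m+5) - (r+lam)*x^(m+3) + (lam*r+1)*x^2 - r with hGdef
  have hGcont : Continuous G := by rw [hGdef]; fun_prop
  have hGeq : ∀ x : ℝ, EqTwo (m+3) lam r x ↔ G x = 0 := by
    intro x
    simp only [hGdef]
    unfold EqTwo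
    constructor <;> intro h <;> linear_combination h
  have hGder : ∀ x : ℝ, deriv G x = x * H₂ x := by
    intro x
    have p := (((hasDerivAt_pow (m+5) x).sub
      ((hasDerivAt_pow (m+3) x).const_mul (r+lam))).add
      ((hasDerivAt_pow 2 x).const_mul (lam*r+1))).sub_const r
    have p' : HasDerivAt G ((↑(m+5))*x^(m+5-1) - (r+lam)*(↑(m+3)*x^(m+3-1))
        + (lam*r+1)*(↑2*x^(2-1))) x := by rw [hGdef]; exact p
    rw [p'.deriv, hH₂val]
    simp only [show m + 5 - 1 = m + 4 from rfl, show m + 3 - 1 = m + 2 from rfl]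
    push_cast
    ring
  have hG0 : G 0 = -r := by
    simp only [hGdef]
    rw [zero_pow (by omega : m+5 ≠ 0), zero_pow (by omega : m+3 ≠ 0)]
    norm_num
  have hS2 : {x : ℝ | 0 < x ∧ EqTwo (m+3) lam r x} = {x : ℝ | 0 < x ∧ G x = 0} := by
    ext x
    simp only [Set.mem_setOf_eq, hGeq]
  -- lower bound : at least one root
  have hlow : 1 ≤ {x : ℝ | 0 < x ∧ G x = 0}.encard := by
    set M₂ : ℝ := 1 + Real.sqrt ((r+lam) + r + 1) with hM₂def
    have hsq2 : Real.sqrt ((r+lam)+r+1)^2 = (r+lam)+r+1 := Real.sq_sqrt (by positivity)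
    have hsq2nn : 0 ≤ Real.sqrt ((r+lam)+r+1) := Real.sqrt_nonneg _
    have hM₂1 : 1 ≤ M₂ := by rw [hM₂def]; linarith
    have hM₂2 : (r+lam)+r+1 ≤ M₂^2 := by
      rw [← hsq2]
      apply pow_le_pow_left₀ hsq2nn
      rw [hM₂def]; linarith
    have hM₂pow : M₂^2 ≤ M₂^(m+3) := pow_le_pow_right₀ hM₂1 (by omega)
    have hGM₂ : 0 < G M₂ := by
      simp only [hGdef]
      exact Gbig m (r+lam) (lam*r+1) r M₂ hrpos hB hM₂1 (by linarith) hM₂pow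
    obtain ⟨x₀, hx₀mem, hGx₀⟩ :=
      intermediate_value_Ioo (by linarith : (0:ℝ) ≤ M₂) hGcont.continuousOn
        ⟨by rw [hG0]; linarith, hGM₂⟩
    rw [Set.one_le_encard_iff_nonempty]
    exact ⟨x₀, hx₀mem.1, hGx₀⟩
  -- upper bound : at most three roots
  have hup : {x : ℝ | 0 < x ∧ G x = 0}.encard ≤ 3 := by
    rcases le_or_gt 0 (H₂ s₂) with hcase | hcase
    · -- G strictly increasing on (0, s₂] and [s₂, ∞)
      have Gm1 : StrictMonoOn G (Set.Icc 0 s₂) := by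
        apply strictMonoOn_of_deriv_pos (convex_Icc 0 s₂) hGcont.continuousOn
        intro x hx
        rw [interior_Icc] at hx
        rw [hGder]
        have h2 := H₂anti ⟨hx.1.le, hx.2.le⟩ (Set.right_mem_Icc.mpr hs₂0.le) hx.2
        exact mul_pos hx.1 (by linarith)
      have Gm2 : StrictMonoOn G (Set.Ici s₂) := by
        apply strictMonoOn_of_deriv_pos (convex_Ici s₂) hGcont.continuousOn
        intro x hx
        rw [interior_Ici] at hx
        rw [hGder]
        have h2 := H₂mono Set.self_mem_Ici (Set.mem_Ici.mpr hx.le) hx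
        exact mul_pos (hs₂0.trans hx) (by linarith)
      have hsub : {x : ℝ | 0 < x ∧ G x = 0} ⊆
          ({x : ℝ | 0 < x ∧ G x = 0} ∩ Set.Icc 0 s₂) ∪
          ({x : ℝ | 0 < x ∧ G x = 0} ∩ Set.Ici s₂) := by
        intro x hx
        rcases le_total x s₂ with h | h
        · exact Or.inl ⟨hx, hx.1.le, h⟩
        · exact Or.inr ⟨hx, h⟩
      calc {x : ℝ | 0 < x ∧ G x = 0}.encard
          ≤ (({x : ℝ | 0 < x ∧ G x = 0} ∩ Set.Icc 0 s₂) ∪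
             ({x : ℝ | 0 < x ∧ G x = 0} ∩ Set.Ici s₂)).encard := Set.encard_mono hsub
        _ ≤ ({x : ℝ | 0 < x ∧ G x = 0} ∩ Set.Icc 0 s₂).encard +
            ({x : ℝ | 0 < x ∧ G x = 0} ∩ Set.Ici s₂).encard := Set.encard_union_le _ _
        _ ≤ 1 + 1 := add_le_add (piece (fun x hx => hx.2) Gm1.injOn)
            (piece (fun x hx => hx.2) Gm2.injOn)
        _ ≤ 3 := by norm_num
    · -- H₂ has two roots a < b ; G is mono / anti / mono
      have hH₂0 : H₂ 0 = 2*(lam*r+1) := by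
        rw [hH₂val, zero_pow (by omega : m+3 ≠ 0), zero_pow (by omega : m+1 ≠ 0)]
        ring
      obtain ⟨a, hamem, hH₂a⟩ :=
        intermediate_value_Ioo' hs₂0.le hH₂cont.continuousOn
          ⟨hcase, by rw [hH₂0]; linarith⟩
      obtain ⟨X₂, hsX₂, hH₂X₂⟩ := H₂big s₂
      obtain ⟨b, hbmem, hH₂b⟩ :=
        intermediate_value_Ioo hsX₂.le hH₂cont.continuousOn ⟨hcase, hH₂X₂⟩
      have ha0 : 0 < a := hamem.1
      have hab : a < b := hamem.2.trans hbmem.1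
      have hpos1 : ∀ x : ℝ, 0 < x → x < a → 0 < H₂ x := by
        intro x hx hxa
        have h2 := H₂anti ⟨hx.le, (hxa.trans hamem.2).le⟩ ⟨ha0.le, hamem.2.le⟩ hxa
        rw [hH₂a] at h2
        exact h2
      have hneg : ∀ x : ℝ, a < x → x < b → H₂ x < 0 := by
        intro x hax hxb
        rcases le_or_gt x s₂ with h | h
        · have h2 := H₂anti ⟨ha0.le, hamem.2.le⟩ ⟨(ha0.trans hax).le, h⟩ hax
          rwa [hH₂a] at h2
        · have h2 := H₂mono (Set.mem_Ici.mpr h.le) (Set.mem_Ici.mpr hbmem.1.le) hxb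
          rwa [hH₂b] at h2
      have hpos2 : ∀ x : ℝ, b < x → 0 < H₂ x := by
        intro x hbx
        have h2 := H₂mono (Set.mem_Ici.mpr hbmem.1.le)
          (Set.mem_Ici.mpr (hbmem.1.le.trans hbx.le)) hbx
        rwa [hH₂b] at h2
      have Gm1 : StrictMonoOn G (Set.Icc 0 a) := by
        apply strictMonoOn_of_deriv_pos (convex_Icc 0 a) hGcont.continuousOn
        intro x hx
        rw [interior_Icc] at hx
        rw [hGder]
        exact mul_pos hx.1 (hpos1 x hx.1 hx.2)
      have Ga : StrictAntiOn G (Set.Icc a b) := by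
        apply strictAntiOn_of_deriv_neg (convex_Icc a b) hGcont.continuousOn
        intro x hx
        rw [interior_Icc] at hx
        rw [hGder]
        exact mul_neg_of_pos_of_neg (ha0.trans hx.1) (hneg x hx.1 hx.2)
      have Gm2 : StrictMonoOn G (Set.Ici b) := by
        apply strictMonoOn_of_deriv_pos (convex_Ici b) hGcont.continuousOn
        intro x hx
        rw [interior_Ici] at hx
        rw [hGder]
        exact mul_pos (ha0.trans (hab.trans hx)) (hpos2 x hx)
      have hsub : {x : ℝ | 0 < x ∧ G x = 0} ⊆
          ({x : ℝ | 0 < x ∧ G x = 0} ∩ Set.Icc 0 a) ∪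
          ({x : ℝ | 0 < x ∧ G x = 0} ∩ Set.Icc a b) ∪
          ({x : ℝ | 0 < x ∧ G x = 0} ∩ Set.Ici b) := by
        intro x hx
        rcases le_total x a with h | h
        · exact Or.inl (Or.inl ⟨hx, hx.1.le, h⟩)
        · rcases le_total x b with h' | h'
          · exact Or.inl (Or.inr ⟨hx, h, h'⟩)
          · exact Or.inr ⟨hx, h'⟩
      calc {x : ℝ | 0 < x ∧ G x = 0}.encard
          ≤ (({x : ℝ | 0 < x ∧ G x = 0} ∩ Set.Icc 0 a) ∪
             ({x : ℝ | 0 < x ∧ G x = 0} ∩ Set.Icc a b) ∪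
             ({x : ℝ | 0 < x ∧ G x = 0} ∩ Set.Ici b)).encard := Set.encard_mono hsub
        _ ≤ (({x : ℝ | 0 < x ∧ G x = 0} ∩ Set.Icc 0 a) ∪
             ({x : ℝ | 0 < x ∧ G x = 0} ∩ Set.Icc a b)).encard +
            ({x : ℝ | 0 < x ∧ G x = 0} ∩ Set.Ici b).encard := Set.encard_union_le _ _
        _ ≤ (({x : ℝ | 0 < x ∧ G x = 0} ∩ Set.Icc 0 a).encard +
             ({x : ℝ | 0 < x ∧ G x = 0} ∩ Set.Icc a b).encard) +
            ({x : ℝ | 0 < x ∧ G x = 0} ∩ Set.Ici b).encard :=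
            add_le_add (Set.encard_union_le _ _) le_rfl
        _ ≤ (1 + 1) + 1 := add_le_add (add_le_add
            (piece (fun x hx => hx.2) Gm1.injOn)
            (piece (fun x hx => hx.2) Ga.injOn))
            (piece (fun x hx => hx.2) Gm2.injOn)
        _ = 3 := by norm_num
  exact ⟨hS1 ▸ hcard1, hne1, hS2 ▸ hlow, hS2 ▸ hup⟩
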